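/- Let α > 1 and let j be a fixed nonnegative integer. Then, as the integer K → ∞ (with K > j), π_{α,K}(K−j) = ((αK)^{K−j} / (K−j)!) / (∑_{k=0}^{K} (αK)^k / k!) converges to α^{−j}(1 − 1/α). -/

import Mathlib

/-!
Dividing numerator and denominator by `(αK)^K / K!` turns `π_{α,K}(K - j)` into
`w_K(j) / ∑_{i ≤ K} w_K(i)` with `w_K(i) = K(K-1)⋯(K-i+1) / (αK)^i`, which vanishes for `i > K`.
For fixed `i`, `w_K(i) → α^{-i}`, and `0 ≤ w_K(i) ≤ α^{-i}` with `∑ α^{-i}` finite because `α > 1`,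
so by Tannery's theorem the denominator tends to `∑ α^{-i} = (1 - 1/α)⁻¹`.
-/

open Filter Topology Finset Nat

section

variable {𝕜 : Type*} [Field 𝕜] [CharZero 𝕜]

theorem pow_sub_div_factorial_sub {x : 𝕜} (hx : x ≠ 0) {n i : ℕ} (hi : i ≤ n) :
    x ^ (n - i) / (n - i)! = x ^ n / n ! * (n.descFactorial i / x ^ i) := by
  have hfac : ((n - i)! : 𝕜) * n.descFactorial i = n ! := by
    exact_mod_cast factorial_mul_descFactorial hi
  have hdesc : (n.descFactorial i : 𝕜) ≠ 0 := by
    exact_mod_cast (descFactorial_pos.mpr hi).ne'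
  rw [pow_sub₀ x hx hi, ← hfac]
  field_simp

theorem sum_range_succ_pow_div_factorial {x : 𝕜} (hx : x ≠ 0) (n : ℕ) :
    ∑ k ∈ range (n + 1), x ^ k / k ! =
      x ^ n / n ! * ∑ i ∈ range (n + 1), (n.descFactorial i : 𝕜) / x ^ i := by
  rw [← sum_range_reflect, mul_sum]
  refine sum_congr rfl fun i hi => ?_
  rw [add_tsub_cancel_right]
  exact pow_sub_div_factorial_sub hx (Nat.lt_succ_iff.mp (mem_range.mp hi))

end

theorem tendsto_descFactorial_div_pow (i : ℕ) :
    Tendsto (fun n : ℕ => (n.descFactorial i : ℝ) / (n : ℝ) ^ i) atTop (𝓝 1) := by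
  induction i with
  | zero => simp
  | succ i ih =>
    have hfactor : Tendsto (fun n : ℕ => 1 - (i : ℝ) * (n : ℝ)⁻¹) atTop (𝓝 1) := by
      simpa using tendsto_const_nhds.sub
        (tendsto_const_nhds.mul (tendsto_inv_atTop_nhds_zero_nat (𝕜 := ℝ)))
    have hprod := hfactor.mul ih
    rw [one_mul] at hprod
    refine hprod.congr' ?_
    filter_upwards [eventually_gt_atTop i] with n hn
    have hn0 : (n : ℝ) ≠ 0 := by exact_mod_cast (zero_lt_of_lt hn).ne'
    rw [descFactorial_succ, Nat.cast_mul, Nat.cast_sub hn.le]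
    field_simp
    ring

theorem tsum_descFactorial_div_pow_eq_sum (x : ℝ) (n : ℕ) :
    ∑' i, (n.descFactorial i : ℝ) / x ^ i = ∑ i ∈ range (n + 1), (n.descFactorial i : ℝ) / x ^ i :=
  tsum_eq_sum fun i hi => by
    simp [descFactorial_eq_zero_iff_lt.mpr (by simpa [Nat.lt_succ_iff] using hi)]

theorem descFactorial_div_mul_pow (α : ℝ) (n i : ℕ) :
    (n.descFactorial i : ℝ) / (α * n) ^ i = (n.descFactorial i : ℝ) / (n : ℝ) ^ i * α⁻¹ ^ i := by
  rw [mul_pow, inv_pow, div_mul_eq_div_div_swap, div_eq_mul_inv _ (α ^ i)]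

theorem tendsto_descFactorial_div_mul_pow (α : ℝ) (i : ℕ) :
    Tendsto (fun n : ℕ => (n.descFactorial i : ℝ) / (α * n) ^ i) atTop (𝓝 (α⁻¹ ^ i)) := by
  simpa [descFactorial_div_mul_pow] using (tendsto_descFactorial_div_pow i).mul_const (α⁻¹ ^ i)

theorem tendsto_tsum_descFactorial_div_pow {α : ℝ} (hα : 1 < α) :
    Tendsto (fun n : ℕ => ∑' i, (n.descFactorial i : ℝ) / (α * n) ^ i) atTop
      (𝓝 (1 - α⁻¹)⁻¹) := by
  have hα0 : 0 < α := zero_lt_one.trans hα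
  have hr0 : 0 ≤ α⁻¹ := inv_nonneg.mpr hα0.le
  have hr1 : α⁻¹ < 1 := inv_lt_one_of_one_lt₀ hα
  rw [← tsum_geometric_of_lt_one hr0 hr1]
  refine tendsto_tsum_of_dominated_convergence (summable_geometric_of_lt_one hr0 hr1)
    (tendsto_descFactorial_div_mul_pow α) (Eventually.of_forall fun n i => ?_)
  rw [descFactorial_div_mul_pow, Real.norm_of_nonneg (by positivity)]
  refine mul_le_of_le_one_left (by positivity) (div_le_one_of_le₀ ?_ (by positivity))
  exact_mod_cast descFactorial_le_pow n i

theorem erlang_point_mass_limit (α : ℝ) (hα : 1 < α) (j : ℕ) :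
    Tendsto (fun K : ℕ =>
        ((α * K) ^ (K - j) / (Nat.factorial (K - j) : ℝ)) /
          (∑ k ∈ Finset.range (K + 1), (α * K) ^ k / (Nat.factorial k : ℝ)))
      atTop (nhds ((1 / α ^ j) * (1 - 1 / α))) := by
  have hα0 : 0 < α := zero_lt_one.trans hα
  have hgap : (1 - α⁻¹)⁻¹ ≠ 0 := inv_ne_zero (sub_ne_zero.mpr (inv_lt_one_of_one_lt₀ hα).ne')
  have hlim := (tendsto_descFactorial_div_mul_pow α j).div (tendsto_tsum_descFactorial_div_pow hα) hgap
  rw [div_inv_eq_mul, inv_pow, ← one_div, ← one_div] at hlim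
  refine hlim.congr' ?_
  filter_upwards [eventually_ge_atTop j, eventually_ge_atTop 1] with K hjK hK
  have hx : α * K ≠ 0 := mul_ne_zero hα0.ne' (by exact_mod_cast (zero_lt_of_lt hK).ne')
  have hscale : (α * K) ^ K / (K ! : ℝ) ≠ 0 := div_ne_zero (pow_ne_zero _ hx) (by positivity)
  rw [pow_sub_div_factorial_sub hx hjK, sum_range_succ_pow_div_factorial hx,
    mul_div_mul_left _ _ hscale, Pi.div_apply, tsum_descFactorial_div_pow_eq_sum]
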